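/- Fix reals ω₀ > 0, γ > 0, θ > 0 and an integer ℓ. For each integer n ≥ 1 let G^n_{ω₀,θ,ℓ}(x, y) = Σ_{j=0}^n ψ_j(x) ψ_j(y)/(λ_j + ω₀² − (2πℓ/θ)² + i·4γπℓ/θ), where ψ_j(x) = ((2 − δ_{0,j})/(n+1))^{1/2} cos(π j (2x+1)/(2(n+1))) and λ_j = 4 sin²(π j/(2(n+1))). Then lim_{n→∞} G^n_{ω₀,θ,ℓ}(0, n) = 0. -/

import Mathlib

/-!
Since `ψ_j(n) = (-1)^j ψ_j(0)`, the number `(n+1) G(0,n)` is, up to a boundary term, twice an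
alternating sum of samples of `t ↦ cos² t / (4 sin² t + c)` on the grid of mesh `π/(2(n+1))` in
`[0, π/2]`, where `c = ω₀² − (2πℓ/θ)² + i·4γπℓ/θ`. As `c` lies off the closed negative real axis,
this profile is Lipschitz; an alternating sum of samples of a Lipschitz function is bounded by a
sample plus the total variation, which is `O(1)` here, so `G(0,n) = O(1/n)`.
-/
open Real Filter

noncomputable section

/-- The Neumann eigenvectors `ψ_j(x) = ((2 − δ_{0,j})/(n+1))^{1/2} cos(πj(2x+1)/(2(n+1)))`. -/
def psiN (n j x : ℕ) : ℝ :=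
  Real.sqrt ((2 - if j = 0 then 1 else 0) / (n + 1)) *
    Real.cos (π * j * (2 * x + 1) / (2 * (n + 1)))

/-- The Green's function `G^n_{ω₀,θ,ℓ}(x,y)` of the complex operator
`[ω₀² − (2πℓ/θ)² + i·4γπℓ/θ] − Δ_N` on `{0,…,n}`, in its eigenfunction representation. -/
def greenNC (n : ℕ) (ω₀ γ θ : ℝ) (l : ℤ) (x y : ℕ) : ℂ :=
  ∑ j ∈ Finset.range (n + 1),
    ((psiN n j x * psiN n j y : ℝ) : ℂ) /
      (((4 * Real.sin (π * j / (2 * (n + 1))) ^ 2 + ω₀ ^ 2 - (2 * π * l / θ) ^ 2 : ℝ) : ℂ)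
        + Complex.I * ((4 * γ * π * l / θ : ℝ) : ℂ))

open Finset

section AlternatingSum

variable {E : Type*}

theorem two_smul_alternating_sum_sub [AddCommGroup E] (f : ℕ → E) (n : ℕ) :
    2 • ∑ j ∈ range (n + 1), (-1 : ℤ) ^ j • f j - f 0 =
      (-1 : ℤ) ^ n • f n - ∑ i ∈ range n, (-1 : ℤ) ^ i • (f (i + 1) - f i) := by
  induction n with
  | zero => simp [two_smul]
  | succ n ih =>
    rw [sum_range_succ, smul_add, add_sub_right_comm, ih, sum_range_succ]
    simp only [pow_succ, mul_neg_one, neg_smul, smul_sub]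
    abel

theorem norm_two_smul_alternating_sum_sub_le [SeminormedAddCommGroup E] (f : ℕ → E) (n : ℕ) :
    ‖2 • ∑ j ∈ range (n + 1), (-1 : ℤ) ^ j • f j - f 0‖ ≤
      ‖f n‖ + ∑ i ∈ range n, ‖f (i + 1) - f i‖ := by
  have norm_neg_one_pow_smul : ∀ (k : ℕ) (x : E), ‖(-1 : ℤ) ^ k • x‖ = ‖x‖ := fun k x => by
    rcases neg_one_pow_eq_or ℤ k with h | h <;> simp [h]
  rw [two_smul_alternating_sum_sub]
  refine (norm_sub_le _ _).trans (add_le_add (norm_neg_one_pow_smul n _).le ?_)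
  exact (norm_sum_le _ _).trans_eq (sum_congr rfl fun i _ => norm_neg_one_pow_smul i _)

theorem LipschitzWith.norm_two_smul_alternating_sum_sub_le [SeminormedAddCommGroup E]
    {K : NNReal} {g : ℝ → E} (hg : LipschitzWith K g) {h : ℝ} (hh : 0 ≤ h) (n : ℕ) :
    ‖2 • ∑ j ∈ range (n + 1), (-1 : ℤ) ^ j • g (j * h) - g 0‖ ≤ ‖g 0‖ + 2 * K * (n * h) := by
  have hstep : ∀ i : ℕ, ‖g ((i + 1 : ℕ) * h) - g (i * h)‖ ≤ K * h := fun i => by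
    simpa [← dist_eq_norm, Real.dist_eq, add_mul, abs_of_nonneg hh] using
      hg.dist_le_mul ((i + 1 : ℕ) * h) (i * h)
  have hlast : ‖g (n * h)‖ ≤ ‖g 0‖ + K * (n * h) := by
    have := hg.dist_le_mul (n * h) 0
    rw [dist_eq_norm, Real.dist_eq, sub_zero, abs_of_nonneg (by positivity)] at this
    linarith [norm_le_norm_add_norm_sub' (g (n * h)) (g 0)]
  calc _ ≤ ‖g (n * h)‖ + ∑ i ∈ range n, ‖g ((i + 1 : ℕ) * h) - g (i * h)‖ := by
        simpa using _root_.norm_two_smul_alternating_sum_sub_le (fun j : ℕ => g (j * h)) n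
    _ ≤ (‖g 0‖ + K * (n * h)) + n * (K * h) := by
        gcongr
        simpa using sum_le_sum fun i (_ : i ∈ range n) => hstep i
    _ = ‖g 0‖ + 2 * K * (n * h) := by ring

end AlternatingSum

namespace Complex

theorem max_re_abs_im_le_norm_ofReal_add (c : ℂ) {u : ℝ} (hu : 0 ≤ u) :
    max c.re |c.im| ≤ ‖(u : ℂ) + c‖ := by
  refine max_le ?_ (by simpa using abs_im_le_norm ((u : ℂ) + c))
  calc c.re ≤ ((u : ℂ) + c).re := by simpa using hu
    _ ≤ ‖(u : ℂ) + c‖ := re_le_norm _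

theorem max_re_abs_im_pos {c : ℂ} (hc : c ∈ slitPlane) : 0 < max c.re |c.im| := by
  rcases mem_slitPlane_iff.1 hc with h | h
  exacts [lt_max_of_lt_left h, lt_max_of_lt_right (abs_pos.2 h)]

end Complex

def crossProfile (c : ℂ) (t : ℝ) : ℂ :=
  ((cos t ^ 2 : ℝ) : ℂ) / (((4 * sin t ^ 2 : ℝ) : ℂ) + c)

theorem lipschitzWith_four_mul_sin_sq : LipschitzWith 4 fun t : ℝ => 4 * sin t ^ 2 := by
  refine LipschitzWith.of_dist_le_mul fun s t => ?_
  have hdiff : 4 * sin s ^ 2 - 4 * sin t ^ 2 = 2 * (cos (2 * t) - cos (2 * s)) := by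
    rw [sin_sq_eq_half_sub, sin_sq_eq_half_sub]; ring
  rw [Real.dist_eq, Real.dist_eq, hdiff, NNReal.coe_ofNat]
  calc |2 * (cos (2 * t) - cos (2 * s))| = 2 * |cos (2 * t) - cos (2 * s)| := by
        rw [abs_mul, abs_two]
    _ ≤ 2 * |2 * t - 2 * s| := mul_le_mul_of_nonneg_left (abs_cos_sub_cos_le _ _) zero_le_two
    _ = 4 * |s - t| := by rw [← mul_sub, abs_mul, abs_two, abs_sub_comm]; ring

theorem lipschitzWith_crossProfile {c : ℂ} (hc : c ∈ Complex.slitPlane) :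
    ∃ K, LipschitzWith K (crossProfile c) := by
  set δ := max c.re |c.im|
  have hδ : 0 < δ := Complex.max_re_abs_im_pos hc
  let φ : ℝ → ℂ := fun u => ((1 - u / 4 : ℝ) : ℂ) / (u + c)
  have hprofile : crossProfile c = φ ∘ fun t => 4 * sin t ^ 2 := by
    ext t
    simp only [crossProfile, φ, Function.comp, cos_sq']
    push_cast
    ring
  have hφ : LipschitzOnWith (‖1 + c / 4‖ / δ ^ 2).toNNReal φ (Set.Ici 0) := by
    refine LipschitzOnWith.of_dist_le' fun u hu v hv => ?_
    have hu' := Complex.max_re_abs_im_le_norm_ofReal_add c hu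
    have hv' := Complex.max_re_abs_im_le_norm_ofReal_add c hv
    have hu0 : (u : ℂ) + c ≠ 0 := norm_pos_iff.1 (hδ.trans_le hu')
    have hv0 : (v : ℂ) + c ≠ 0 := norm_pos_iff.1 (hδ.trans_le hv')
    have hdiff : φ u - φ v = (1 + c / 4) * ((v - u : ℝ) : ℂ) / ((u + c) * (v + c)) := by
      simp only [φ]
      field_simp
      push_cast
      ring
    have hden : δ ^ 2 ≤ ‖(u : ℂ) + c‖ * ‖(v : ℂ) + c‖ := by
      rw [sq]; exact mul_le_mul hu' hv' hδ.le (norm_nonneg _)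
    rw [dist_eq_norm, hdiff, norm_div, norm_mul, norm_mul, Complex.norm_real, Real.norm_eq_abs,
      abs_sub_comm, ← Real.dist_eq]
    calc ‖1 + c / 4‖ * dist u v / (‖(u : ℂ) + c‖ * ‖(v : ℂ) + c‖)
        ≤ ‖1 + c / 4‖ * dist u v / δ ^ 2 := by gcongr
      _ = ‖1 + c / 4‖ / δ ^ 2 * dist u v := by ring
  rw [hprofile]
  exact ⟨_, lipschitzOnWith_univ.1 <| hφ.comp lipschitzWith_four_mul_sin_sq.lipschitzOnWith
    fun t _ => Set.mem_Ici.2 (by positivity)⟩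

def greenNCShift (ω₀ γ θ : ℝ) (l : ℤ) : ℂ :=
  ((ω₀ ^ 2 - (2 * π * l / θ) ^ 2 : ℝ) : ℂ) + Complex.I * ((4 * γ * π * l / θ : ℝ) : ℂ)

theorem greenNCShift_mem_slitPlane {ω₀ γ θ : ℝ} (hω : 0 < ω₀) (hγ : 0 < γ) (hθ : 0 < θ) (l : ℤ) :
    greenNCShift ω₀ γ θ l ∈ Complex.slitPlane := by
  rcases eq_or_ne l 0 with rfl | hl
  · simpa [greenNCShift, ← Complex.ofReal_pow] using pow_pos hω 2
  · refine Complex.mem_slitPlane_iff.2 (Or.inr ?_)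
    have : (l : ℝ) ≠ 0 := Int.cast_ne_zero.2 hl
    rw [greenNCShift, Complex.add_im, Complex.ofReal_im, Complex.I_mul_im, Complex.ofReal_re,
      zero_add]
    positivity

theorem psiN_zero_mul_psiN_self (n j : ℕ) :
    psiN n j 0 * psiN n j n =
      (-1) ^ j * ((2 - if j = 0 then 1 else 0) / (n + 1)) * cos (j * (π / (2 * (n + 1)))) ^ 2 := by
  have hw : 0 ≤ (2 - if j = 0 then 1 else 0 : ℝ) / (n + 1) := by
    apply div_nonneg _ (by positivity)
    split_ifs <;> norm_num
  have h0 : π * j * (2 * ((0 : ℕ) : ℝ) + 1) / (2 * (n + 1)) = j * (π / (2 * (n + 1))) := by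
    push_cast; ring
  have hn : π * j * (2 * (n : ℝ) + 1) / (2 * (n + 1)) = j * π - j * (π / (2 * (n + 1))) := by
    field_simp; ring
  rw [psiN, psiN, h0, hn, cos_nat_mul_pi_sub]
  linear_combination (-1) ^ j * cos (j * (π / (2 * (n + 1)))) ^ 2 * Real.mul_self_sqrt hw

theorem greenNC_zero_self (n : ℕ) (ω₀ γ θ : ℝ) (l : ℤ) :
    greenNC n ω₀ γ θ l 0 n =
      (2 • ∑ j ∈ range (n + 1), (-1 : ℤ) ^ j •
          crossProfile (greenNCShift ω₀ γ θ l) (j * (π / (2 * (n + 1)))) -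
        crossProfile (greenNCShift ω₀ γ θ l) 0) / (n + 1) := by
  set s : ℕ → ℂ := fun j =>
    (-1 : ℤ) ^ j • crossProfile (greenNCShift ω₀ γ θ l) (j * (π / (2 * (n + 1))))
  have hterm : ∀ j ∈ range (n + 1),
      ((psiN n j 0 * psiN n j n : ℝ) : ℂ) /
        (((4 * sin (π * j / (2 * (n + 1))) ^ 2 + ω₀ ^ 2 - (2 * π * l / θ) ^ 2 : ℝ) : ℂ) +
          Complex.I * ((4 * γ * π * l / θ : ℝ) : ℂ)) =
      (2 - if j = 0 then 1 else 0) * s j / (n + 1) := by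
    intro j _
    rw [psiN_zero_mul_psiN_self, show π * j / (2 * (n + 1)) = j * (π / (2 * (n + 1))) by ring]
    simp only [s, crossProfile, greenNCShift, zsmul_eq_mul]
    split_ifs <;> push_cast <;> ring
  have hs0 : s 0 = crossProfile (greenNCShift ω₀ γ θ l) 0 := by simp [s]
  rw [greenNC, sum_congr rfl hterm, ← sum_div, ← hs0]
  congr 1
  simp only [sub_mul, ite_mul, one_mul, zero_mul, sum_sub_distrib, sum_ite_eq', mem_range,
    Nat.zero_lt_succ, if_true, ← mul_sum, nsmul_eq_mul, Nat.cast_ofNat]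

/-- The cross-boundary Green's function vanishes in the limit:
`lim_{n→∞} G^n_{ω₀,θ,ℓ}(0, n) = 0`. -/
theorem greenNC_cross_boundary_limit (ω₀ γ θ : ℝ) (hω : 0 < ω₀) (hγ : 0 < γ) (hθ : 0 < θ)
    (l : ℤ) :
    Tendsto (fun n : ℕ => greenNC n ω₀ γ θ l 0 n) atTop (nhds 0) := by
  set F := crossProfile (greenNCShift ω₀ γ θ l)
  obtain ⟨K, hK⟩ := lipschitzWith_crossProfile (greenNCShift_mem_slitPlane hω hγ hθ l)
  have hbound : ∀ n : ℕ, ‖greenNC n ω₀ γ θ l 0 n‖ ≤ (‖F 0‖ + K * π) / (n + 1) := by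
    intro n
    have hnh : (n : ℝ) * (π / (2 * (n + 1))) ≤ π / 2 := by
      calc (n : ℝ) * (π / (2 * (n + 1))) = π / 2 * (n / (n + 1)) := by field_simp
        _ ≤ π / 2 := mul_le_of_le_one_right (by positivity)
          ((div_le_one (by positivity)).2 (by linarith))
    have hnorm : ‖(n : ℂ) + 1‖ = n + 1 := by exact_mod_cast Complex.norm_natCast (n + 1)
    rw [greenNC_zero_self, norm_div, hnorm]
    gcongr
    calc _ ≤ ‖F 0‖ + 2 * K * (n * (π / (2 * (n + 1)))) :=
          hK.norm_two_smul_alternating_sum_sub_le (by positivity) n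
      _ ≤ ‖F 0‖ + 2 * K * (π / 2) := by gcongr
      _ = ‖F 0‖ + K * π := by ring
  refine squeeze_zero_norm hbound ?_
  simpa only [mul_zero, mul_one_div] using
    tendsto_one_div_add_atTop_nhds_zero_nat.const_mul (‖F 0‖ + K * π)

end
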